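/- arXiv:2310.10107 — 2 statements merged into one kernel-verified Lean document; each statement's English description precedes it below -/
import Mathlib

section
/- Let d, K ≥ 1 be natural numbers and let x_k ∈ ℝ^d for k ∈ {1,…,K} satisfy ‖x_k‖₂ ≤ 1. Let λ > 0 and define the d×d matrices V_k := λ I + ∑_{j=1}^{k} x_j x_jᵀ (each V_k is positive definite and hence invertible). Then ∑_{k=1}^{K} √(x_kᵀ V_k⁻¹ x_k) ≤ √(d K log(1 + K/(d λ))). -/
/-
Adding `v vᵀ` to a positive definite `A` multiplies `det A` by `1 + s`, where `s = vᵀ A⁻¹ v`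
(matrix determinant lemma), while by Sherman–Morrison `vᵀ (A + v vᵀ)⁻¹ v = s / (1 + s)`, which
is at most `log (1 + s)`. Hence the quadratic forms `x_kᵀ V_k⁻¹ x_k` telescope to at most
`log det V_K - log det (λ I)`. AM–GM on the eigenvalues gives
`det V_K ≤ (tr V_K / d) ^ d ≤ (λ + K / d) ^ d`, and Cauchy–Schwarz passes from the sum of the
quadratic forms to the sum of their square roots.
-/

open Matrix Finset

theorem Finset.prod_le_sum_div_card_pow {ι : Type*} (s : Finset ι) {z : ι → ℝ}
    (hz : ∀ i ∈ s, 0 ≤ z i) : ∏ i ∈ s, z i ≤ ((∑ i ∈ s, z i) / #s) ^ #s := by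
  rcases s.eq_empty_or_nonempty with rfl | hs
  · simp
  have hcard : (#s : ℝ) ≠ 0 := by exact_mod_cast hs.card_pos.ne'
  have amgm : ∏ i ∈ s, z i ^ (#s : ℝ)⁻¹ ≤ ∑ i ∈ s, (#s : ℝ)⁻¹ * z i :=
    Real.geom_mean_le_arith_mean_weighted s _ z (fun _ _ ↦ by positivity)
      (by simp [hcard]) hz
  calc ∏ i ∈ s, z i = (∏ i ∈ s, z i ^ (#s : ℝ)⁻¹) ^ #s := by
        rw [← prod_pow]
        exact prod_congr rfl fun i hi ↦ (Real.rpow_inv_natCast_pow (hz i hi) hs.card_pos.ne').symm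
    _ ≤ (∑ i ∈ s, (#s : ℝ)⁻¹ * z i) ^ #s :=
        pow_le_pow_left₀ (prod_nonneg fun i hi ↦ Real.rpow_nonneg (hz i hi) _) amgm _
    _ = ((∑ i ∈ s, z i) / #s) ^ #s := by rw [← mul_sum, inv_mul_eq_div]

theorem Real.sum_sqrt_le_sqrt_card_mul_sum {ι : Type*} (s : Finset ι) {f : ι → ℝ}
    (hf : ∀ i ∈ s, 0 ≤ f i) : ∑ i ∈ s, √(f i) ≤ √(#s * ∑ i ∈ s, f i) := by
  refine Real.le_sqrt_of_sq_le (sq_sum_le_card_mul_sum_sq.trans_eq ?_)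
  rw [Finset.sum_congr rfl fun i hi ↦ Real.sq_sqrt (hf i hi)]

namespace Matrix

variable {n : Type*} [Fintype n]

theorem posSemidef_vecMulVec_self (v : n → ℝ) : (vecMulVec v v).PosSemidef := by
  simpa using posSemidef_vecMulVec_self_star v

theorem PosSemidef.add_sum_vecMulVec_self {ι : Type*} {A : Matrix n n ℝ} (hA : A.PosSemidef)
    (s : Finset ι) (v : ι → n → ℝ) : (A + ∑ i ∈ s, vecMulVec (v i) (v i)).PosSemidef :=
  hA.add (posSemidef_sum s fun i _ ↦ posSemidef_vecMulVec_self (v i))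

theorem PosDef.add_sum_vecMulVec_self {ι : Type*} {A : Matrix n n ℝ} (hA : A.PosDef)
    (s : Finset ι) (v : ι → n → ℝ) : (A + ∑ i ∈ s, vecMulVec (v i) (v i)).PosDef :=
  hA.add_posSemidef (posSemidef_sum s fun i _ ↦ posSemidef_vecMulVec_self (v i))

variable [DecidableEq n]

theorem PosSemidef.det_le_trace_div_card_pow {A : Matrix n n ℝ} (hA : A.PosSemidef) :
    A.det ≤ (A.trace / Fintype.card n) ^ Fintype.card n := by
  rw [hA.isHermitian.det_eq_prod_eigenvalues, hA.isHermitian.trace_eq_sum_eigenvalues]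
  simpa using Finset.univ.prod_le_sum_div_card_pow fun i _ ↦ hA.eigenvalues_nonneg i

theorem PosSemidef.dotProduct_inv_mulVec_nonneg {A : Matrix n n ℝ} (hA : A.PosSemidef)
    (v : n → ℝ) : 0 ≤ v ⬝ᵥ (A⁻¹ *ᵥ v) := by
  simpa using hA.inv.dotProduct_mulVec_nonneg v

section RankOne

variable {K : Type*} [Field K]

theorem det_add_vecMulVec {A : Matrix n n K} (hA : IsUnit A.det) (u v : n → K) :
    (A + vecMulVec u v).det = A.det * (1 + v ⬝ᵥ (A⁻¹ *ᵥ u)) := by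
  rw [vecMulVec_eq Unit, det_add_replicateCol_mul_replicateRow hA, Matrix.mul_assoc,
    ← replicateCol_mulVec, det_unique (n := Unit)]
  simp [replicateRow_mul_replicateCol_apply]

theorem inv_add_vecMulVec_mulVec {A : Matrix n n K} (hA : IsUnit A.det) (u v : n → K)
    (hs : 1 + v ⬝ᵥ (A⁻¹ *ᵥ u) ≠ 0) :
    (A + vecMulVec u v)⁻¹ *ᵥ u = (1 + v ⬝ᵥ (A⁻¹ *ᵥ u))⁻¹ • (A⁻¹ *ᵥ u) := by
  set B := A + vecMulVec u v
  have hB : IsUnit B.det := by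
    rw [det_add_vecMulVec hA]
    exact isUnit_iff_ne_zero.mpr (mul_ne_zero hA.ne_zero hs)
  have hBu : B *ᵥ (A⁻¹ *ᵥ u) = (1 + v ⬝ᵥ (A⁻¹ *ᵥ u)) • u := by
    rw [add_mulVec, mulVec_mulVec, mul_nonsing_inv A hA, one_mulVec, vecMulVec_mulVec,
      op_smul_eq_smul, add_smul, one_smul]
  calc B⁻¹ *ᵥ u = B⁻¹ *ᵥ ((1 + v ⬝ᵥ (A⁻¹ *ᵥ u))⁻¹ • B *ᵥ (A⁻¹ *ᵥ u)) := by
        rw [hBu, inv_smul_smul₀ hs]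
    _ = (1 + v ⬝ᵥ (A⁻¹ *ᵥ u))⁻¹ • (A⁻¹ *ᵥ u) := by
        rw [mulVec_smul, mulVec_mulVec, nonsing_inv_mul B hB, one_mulVec]

end RankOne

theorem PosDef.dotProduct_inv_add_vecMulVec_self_le {A : Matrix n n ℝ} (hA : A.PosDef)
    (v : n → ℝ) :
    v ⬝ᵥ ((A + vecMulVec v v)⁻¹ *ᵥ v) ≤ Real.log (A + vecMulVec v v).det - Real.log A.det := by
  have hA' : IsUnit A.det := hA.det_pos.ne'.isUnit
  set s := v ⬝ᵥ (A⁻¹ *ᵥ v)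
  have hs : 0 < 1 + s := by linarith [hA.posSemidef.dotProduct_inv_mulVec_nonneg v]
  rw [inv_add_vecMulVec_mulVec hA' v v hs.ne', dotProduct_smul, smul_eq_mul,
    det_add_vecMulVec hA', Real.log_mul hA.det_pos.ne' hs.ne', add_sub_cancel_left]
  calc (1 + s)⁻¹ * s = 1 - (1 + s)⁻¹ := by field_simp; ring
    _ ≤ Real.log (1 + s) := Real.one_sub_inv_le_log_of_pos hs

theorem PosDef.sum_dotProduct_inv_mulVec_le_log_det_sub {A : Matrix n n ℝ} (hA : A.PosDef)
    (v : ℕ → n → ℝ) (N : ℕ) :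
    ∑ m ∈ range N,
        v m ⬝ᵥ ((A + ∑ j ∈ range (m + 1), vecMulVec (v j) (v j))⁻¹ *ᵥ v m) ≤
      Real.log (A + ∑ j ∈ range N, vecMulVec (v j) (v j)).det - Real.log A.det := by
  induction N with
  | zero => simp
  | succ N ih =>
    have step :=
      (hA.add_sum_vecMulVec_self (range N) v).dotProduct_inv_add_vecMulVec_self_le (v N)
    rw [Finset.sum_range_succ, Finset.sum_range_succ, ← add_assoc]
    linarith

theorem PosSemidef.det_add_sum_vecMulVec_self_le {ι : Type*} {A : Matrix n n ℝ}
    (hA : A.PosSemidef) (s : Finset ι) {v : ι → n → ℝ} (hv : ∀ i ∈ s, v i ⬝ᵥ v i ≤ 1) :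
    (A + ∑ i ∈ s, vecMulVec (v i) (v i)).det ≤
      ((A.trace + #s) / Fintype.card n) ^ Fintype.card n := by
  have hB := hA.add_sum_vecMulVec_self s v
  have htrace : (A + ∑ i ∈ s, vecMulVec (v i) (v i)).trace ≤ A.trace + #s := by
    rw [trace_add, trace_sum]
    simpa using Finset.sum_le_sum hv
  exact hB.det_le_trace_div_card_pow.trans <|
    pow_le_pow_left₀ (div_nonneg hB.trace_nonneg (Nat.cast_nonneg _))
      (div_le_div_of_nonneg_right htrace (Nat.cast_nonneg _)) _

theorem log_det_smul_one_add_sum_vecMulVec_self_sub_le {ι : Type*} {lam : ℝ} (hlam : 0 < lam)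
    (s : Finset ι) {v : ι → n → ℝ} (hv : ∀ i ∈ s, v i ⬝ᵥ v i ≤ 1) :
    Real.log (lam • (1 : Matrix n n ℝ) + ∑ i ∈ s, vecMulVec (v i) (v i)).det -
        Real.log (lam • (1 : Matrix n n ℝ)).det ≤
      Fintype.card n * Real.log (1 + #s / (Fintype.card n * lam)) := by
  set c := Fintype.card n
  have hA : (lam • (1 : Matrix n n ℝ)).PosDef := PosDef.one.smul hlam
  have hdet := hA.posSemidef.det_add_sum_vecMulVec_self_le s hv
  rw [trace_smul, trace_one, smul_eq_mul] at hdet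
  have hB := hA.add_sum_vecMulVec_self s v
  have hlog_det : Real.log (lam • (1 : Matrix n n ℝ) + ∑ i ∈ s, vecMulVec (v i) (v i)).det ≤
      c * Real.log ((lam * c + #s) / c) := by
    rw [← Real.log_pow]
    exact Real.log_le_log hB.det_pos hdet
  have hlog_lam : Real.log (lam • (1 : Matrix n n ℝ)).det = c * Real.log lam := by
    rw [det_smul, det_one, mul_one, Real.log_pow]
  rw [hlog_lam]
  refine (sub_le_sub_right hlog_det _).trans_eq ?_
  rcases eq_or_ne (c : ℝ) 0 with hc | hc
  · simp [hc]
  rw [← mul_sub, ← Real.log_div (by positivity) hlam.ne']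
  congr 2
  field_simp

end Matrix

theorem elliptical_potential_lemma_general
    (d K : ℕ)
    (x : Fin K → Fin d → ℝ)
    (hx : ∀ k : Fin K, Real.sqrt (∑ i, (x k i) ^ 2) ≤ 1)
    (lam : ℝ) (hlam : 0 < lam)
    (V : Fin K → Matrix (Fin d) (Fin d) ℝ)
    (hV : ∀ k : Fin K,
      V k = lam • (1 : Matrix (Fin d) (Fin d) ℝ) +
        ∑ j ∈ Finset.Iic k, Matrix.vecMulVec (x j) (x j)) :
    ∑ k : Fin K, Real.sqrt (x k ⬝ᵥ ((V k)⁻¹ *ᵥ x k)) ≤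
      Real.sqrt (d * K * Real.log (1 + K / (d * lam))) := by
  set y : ℕ → Fin d → ℝ := Function.extend Fin.val x 0
  have hy (k : Fin K) : y k = x k := Fin.val_injective.extend_apply x 0 k
  have hA : (lam • (1 : Matrix (Fin d) (Fin d) ℝ)).PosDef := PosDef.one.smul hlam
  have hVy (k : Fin K) :
      V k = lam • (1 : Matrix (Fin d) (Fin d) ℝ) + ∑ j ∈ range (k + 1), vecMulVec (y j) (y j) := by
    rw [hV, Nat.range_succ_eq_Iic, ← Fin.map_valEmbedding_Iic, sum_map]
    simp only [Fin.valEmbedding_apply, hy]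
  have hy_norm : ∀ j ∈ range K, y j ⬝ᵥ y j ≤ 1 := fun j hj ↦ by
    simpa [hy ⟨j, mem_range.mp hj⟩, dotProduct, sq] using hx ⟨j, mem_range.mp hj⟩
  have hsum : ∑ k, x k ⬝ᵥ ((V k)⁻¹ *ᵥ x k) ≤ d * Real.log (1 + K / (d * lam)) := calc
    _ = ∑ m ∈ range K, y m ⬝ᵥ
          ((lam • 1 + ∑ j ∈ range (m + 1), vecMulVec (y j) (y j))⁻¹ *ᵥ y m) := by
        rw [← Fin.sum_univ_eq_sum_range]
        simp only [hy, hVy]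
    _ ≤ _ := hA.sum_dotProduct_inv_mulVec_le_log_det_sub y K
    _ ≤ _ := by
        simpa using log_det_smul_one_add_sum_vecMulVec_self_sub_le hlam (range K) hy_norm
  have hV_psd (k : Fin K) : (V k).PosSemidef := by
    rw [hVy]
    exact hA.posSemidef.add_sum_vecMulVec_self _ y
  calc _ ≤ √(K * ∑ k, x k ⬝ᵥ ((V k)⁻¹ *ᵥ x k)) := by
        simpa only [card_univ, Fintype.card_fin] using Real.sum_sqrt_le_sqrt_card_mul_sum univ
          fun k _ ↦ (hV_psd k).dotProduct_inv_mulVec_nonneg (x k)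
    _ ≤ _ := Real.sqrt_le_sqrt <|
        (mul_le_mul_of_nonneg_left hsum K.cast_nonneg).trans_eq (by ring)

/-- **Elliptical Potential Lemma** (Lemma 8).  For unit-norm-bounded vectors
`x_1, …, x_K ∈ ℝ^d` and `V_k = λ I + ∑_{j=1}^k x_j x_jᵀ`, one has
`∑_{k=1}^K √(x_kᵀ V_k⁻¹ x_k) ≤ √(d K log(1 + K/(dλ)))`. -/
theorem elliptical_potential_lemma
    (d K : ℕ) (hd : 1 ≤ d) (hK : 1 ≤ K)
    (x : Fin K → Fin d → ℝ)
    (hx : ∀ k : Fin K, Real.sqrt (∑ i, (x k i) ^ 2) ≤ 1)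
    (lam : ℝ) (hlam : 0 < lam)
    (V : Fin K → Matrix (Fin d) (Fin d) ℝ)
    (hV : ∀ k : Fin K,
      V k = lam • (1 : Matrix (Fin d) (Fin d) ℝ) +
        ∑ j ∈ Finset.Iic k, Matrix.vecMulVec (x j) (x j)) :
    ∑ k : Fin K, Real.sqrt (x k ⬝ᵥ ((V k)⁻¹ *ᵥ x k)) ≤
      Real.sqrt (d * K * Real.log (1 + K / (d * lam))) :=
  elliptical_potential_lemma_general d K x hx lam hlam V hV
end

section
/- Let d, K, L, M, N ≥ 1 be natural numbers and let w_{k,l,m}, x_{k,l,n} ∈ ℝ^d for k ∈ {1,…,K}, l ∈ {1,…,L}, m ∈ {1,…,M}, n ∈ {1,…,N}. Let β ≥ 0 and G_w, G_x > 0 be reals. Suppose that for every k ∈ {1,…,K}: (i) ∑_{j=1}^{k} ( ∑_{(l,m,n) ∈ [L]×[M]×[N]} |w_{k,l,m}ᵀ x_{j,l,n}| )² ≤ β, (ii) ∑_{l=1}^{L} ∑_{m=1}^{M} ‖w_{k,l,m}‖₁ ≤ G_w, and (iii) ∑_{l=1}^{L} ∑_{n=1}^{N} ‖x_{k,l,n}‖₁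 ≤ G_x. Then for every λ > 0, ∑_{k=1}^{K} ∑_{(l,m,n) ∈ [L]×[M]×[N]} |w_{k,l,m}ᵀ x_{k,l,n}| ≤ √((λ + β) · d L M K · log(1 + M G_w² G_x² K / (d L λ))). -/
/-!
Put `θ_k(l, m, i) = w_{k,l,m,i}` and `φ_k(l, m, i) = ∑ₙ sign(w_{k,l,m}ᵀ x_{k,l,n}) x_{k,l,n,i}`
in `ℝ^{L×M×d}`. Then `θ_kᵀ φ_k` is the `k`-th diagonal term of the claim, while `|θ_kᵀ φ_j|` is
at most the `(k, j)` term of hypothesis (i). With the regularised Gram matrices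
`V_k = (λ / G_w²) I + ∑_{j ≤ k} φ_j φ_jᵀ`, hypotheses (i) and (ii) give `θ_kᵀ V_k θ_k ≤ λ + β`,
so Cauchy–Schwarz in the `V_k`-geometry gives `(θ_kᵀ φ_k)² ≤ (λ + β) φ_kᵀ V_k⁻¹ φ_k`.
By the matrix determinant lemma, `φ_kᵀ V_k⁻¹ φ_k ≤ log det V_k - log det V_{k-1}`, and the
telescoped sum is at most `dLM log(1 + M G_w² G_x² K / (dLMλ))` by AM–GM on the eigenvalues of
`V_K` and hypothesis (iii). Cauchy–Schwarz over `k` then gives the factor `K`.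
-/

open Matrix Finset

namespace Matrix

variable {ι : Type*} [Fintype ι]

theorem IsHermitian.dotProduct_mulVec_comm {A : Matrix ι ι ℝ} (hA : A.IsHermitian)
    (a b : ι → ℝ) : a ⬝ᵥ A *ᵥ b = b ⬝ᵥ A *ᵥ a := by
  have hT : Aᵀ = A := by simpa [conjTranspose_eq_transpose_of_trivial] using hA.eq
  rw [dotProduct_mulVec b, ← mulVec_transpose, hT, dotProduct_comm]

theorem PosDef.sq_dotProduct_le [DecidableEq ι] {A : Matrix ι ι ℝ} (hA : A.PosDef)
    (u v : ι → ℝ) : (u ⬝ᵥ v) ^ 2 ≤ (u ⬝ᵥ A *ᵥ u) * (v ⬝ᵥ A⁻¹ *ᵥ v) := by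
  set y := A⁻¹ *ᵥ v
  have hAy : A *ᵥ y = v := by
    rw [mulVec_mulVec, mul_nonsing_inv _ hA.det_pos.ne'.isUnit, one_mulVec]
  have cs := (toBilin' A).apply_mul_apply_le_of_forall_zero_le
    (fun z => by simpa [toBilin'_apply'] using hA.posSemidef.dotProduct_mulVec_nonneg z) u y
  simp only [toBilin'_apply'] at cs
  rwa [hA.isHermitian.dotProduct_mulVec_comm y u, hAy, dotProduct_comm y v, ← sq] at cs

theorem PosDef.log_det_le [DecidableEq ι] [Nonempty ι] {A : Matrix ι ι ℝ} (hA : A.PosDef) :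
    Real.log A.det ≤ Fintype.card ι * Real.log (A.trace / Fintype.card ι) := by
  set n : ℝ := (Fintype.card ι : ℝ)
  have hn : 0 < n := by simp [n, Fintype.card_pos]
  have jensen := strictConcaveOn_log_Ioi.concaveOn.le_map_sum (t := univ)
    (w := fun _ => n⁻¹) (p := hA.isHermitian.eigenvalues) (fun _ _ => by positivity)
    (by simp [n, hn.ne']) (fun i _ => hA.eigenvalues_pos i)
  rw [← smul_sum, ← smul_sum, smul_eq_mul, smul_eq_mul,
    ← Real.log_prod fun i _ => (hA.eigenvalues_pos i).ne', inv_mul_eq_div, div_le_iff₀' hn,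
    inv_mul_eq_div] at jensen
  rwa [hA.isHermitian.det_eq_prod_eigenvalues, hA.isHermitian.trace_eq_sum_eigenvalues]

theorem PosDef.dotProduct_inv_add_vecMulVec_le_log_det_sub [DecidableEq ι] {B : Matrix ι ι ℝ}
    (hB : B.PosDef) (φ : ι → ℝ) :
    φ ⬝ᵥ (B + vecMulVec φ φ)⁻¹ *ᵥ φ ≤ Real.log (B + vecMulVec φ φ).det - Real.log B.det := by
  set A := B + vecMulVec φ φ
  have hA : A.PosDef := hB.add_posSemidef (by simpa using posSemidef_vecMulVec_self_star φ)
  set g := φ ⬝ᵥ A⁻¹ *ᵥ φ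
  have hdet : B.det = A.det * (1 - g) := by
    have hB_eq : B = A + replicateCol Unit (-φ) * replicateRow Unit φ := by
      simp [A, ← vecMulVec_eq]
    rw [hB_eq, det_add_replicateCol_mul_replicateRow hA.det_pos.ne'.isUnit, Matrix.mul_assoc,
      ← replicateCol_mulVec, det_unique (1 + _), add_apply, one_apply_eq,
      replicateRow_mul_replicateCol_apply, mulVec_neg, dotProduct_neg, ← sub_eq_add_neg]
  have hg : 0 < 1 - g := pos_of_mul_pos_right (hdet ▸ hB.det_pos) hA.det_pos.le
  rw [hdet, Real.log_mul hA.det_pos.ne' hg.ne']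
  linarith [Real.log_le_sub_one_of_pos hg]

end Matrix

section RegGram

variable {κ ι : Type*} [DecidableEq ι] (lam : ℝ) (φ : κ → ι → ℝ)

def regGram (s : Finset κ) : Matrix ι ι ℝ :=
  lam • 1 + ∑ j ∈ s, vecMulVec (φ j) (φ j)

variable {lam}

theorem posDef_regGram [Fintype ι] (hlam : 0 < lam) (s : Finset κ) : (regGram lam φ s).PosDef :=
  (PosDef.one.smul hlam).add_posSemidef
    (posSemidef_sum s fun j _ => by simpa using posSemidef_vecMulVec_self_star (φ j))

theorem regGram_insert [DecidableEq κ] {s : Finset κ} {a : κ} (ha : a ∉ s) :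
    regGram lam φ (insert a s) = regGram lam φ s + vecMulVec (φ a) (φ a) := by
  rw [regGram, regGram, sum_insert ha]
  abel

theorem dotProduct_regGram_mulVec [Fintype ι] (s : Finset κ) (θ : ι → ℝ) :
    θ ⬝ᵥ regGram lam φ s *ᵥ θ = lam * (θ ⬝ᵥ θ) + ∑ j ∈ s, (θ ⬝ᵥ φ j) ^ 2 := by
  simp only [regGram, add_mulVec, smul_mulVec, one_mulVec, dotProduct_add, dotProduct_smul,
    smul_eq_mul, sum_mulVec, dotProduct_sum]
  congr 1
  refine sum_congr rfl fun j _ => ?_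
  rw [← vecMul_transpose, transpose_vecMulVec, vecMul_vecMulVec, dotProduct_smul, smul_eq_mul,
    dotProduct_comm, sq]

theorem trace_regGram [Fintype ι] (s : Finset κ) :
    (regGram lam φ s).trace = lam * Fintype.card ι + ∑ j ∈ s, φ j ⬝ᵥ φ j := by
  simp [regGram, trace_add, trace_smul, trace_sum, trace_vecMulVec]

theorem det_regGram_empty [Fintype ι] : (regGram lam φ ∅).det = lam ^ Fintype.card ι := by
  simp [regGram]

theorem sum_dotProduct_regGram_inv_le_log_det [Fintype ι] [LinearOrder κ] (hlam : 0 < lam)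
    (s : Finset κ) :
    ∑ k ∈ s, φ k ⬝ᵥ (regGram lam φ {j ∈ s | j ≤ k})⁻¹ *ᵥ φ k ≤
      Real.log (regGram lam φ s).det - Real.log (regGram lam φ ∅).det := by
  induction s using Finset.induction_on_max with
  | empty => simp
  | insert a s ha ih =>
    have has : a ∉ s := fun h => lt_irrefl a (ha a h)
    have hfilter_a : {j ∈ insert a s | j ≤ a} = insert a s :=
      filter_true_of_mem fun j hj => (mem_insert.1 hj).elim le_of_eq fun h => (ha j h).le
    have hfilter_s : ∀ k ∈ s, {j ∈ insert a s | j ≤ k} = {j ∈ s | j ≤ k} := fun k hk => by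
      rw [filter_insert, if_neg (not_le.2 (ha k hk))]
    have step := (posDef_regGram φ hlam s).dotProduct_inv_add_vecMulVec_le_log_det_sub (φ a)
    rw [← regGram_insert φ has] at step
    rw [sum_insert has, hfilter_a, sum_congr rfl fun k hk => by rw [hfilter_s k hk]]
    linarith

-- The elliptical potential lemma.
theorem sum_dotProduct_regGram_inv_le [Fintype ι] [Nonempty ι] [LinearOrder κ] (hlam : 0 < lam)
    (s : Finset κ) :
    ∑ k ∈ s, φ k ⬝ᵥ (regGram lam φ {j ∈ s | j ≤ k})⁻¹ *ᵥ φ k ≤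
      Fintype.card ι * Real.log (1 + (∑ k ∈ s, φ k ⬝ᵥ φ k) / (Fintype.card ι * lam)) := by
  set n : ℝ := (Fintype.card ι : ℝ)
  have hn : 0 < n := by simp [n, Fintype.card_pos]
  have hS : 0 ≤ ∑ k ∈ s, φ k ⬝ᵥ φ k :=
    sum_nonneg fun k _ => by simpa using dotProduct_star_self_nonneg (φ k)
  have hlog_det := (posDef_regGram φ hlam s).log_det_le
  rw [trace_regGram] at hlog_det
  have hratio : (lam * n + ∑ k ∈ s, φ k ⬝ᵥ φ k) / n / lam =
      1 + (∑ k ∈ s, φ k ⬝ᵥ φ k) / (n * lam) := by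
    field_simp
  have hlog_ratio :=
    Real.log_div (by positivity : (lam * n + ∑ k ∈ s, φ k ⬝ᵥ φ k) / n ≠ 0) hlam.ne'
  rw [hratio] at hlog_ratio
  refine (sum_dotProduct_regGram_inv_le_log_det φ hlam s).trans ?_
  rw [det_regGram_empty, Real.log_pow, hlog_ratio, mul_sub]
  linarith

end RegGram

theorem sum_dotProduct_le_sqrt_of_sum_sq_dotProduct_le {κ ι : Type*} [Fintype κ] [LinearOrder κ]
    [LocallyFiniteOrderBot κ] [Fintype ι] [Nonempty ι] (θ φ : κ → ι → ℝ) {lam β G c : ℝ}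
    (hlam : 0 < lam) (hβ : 0 ≤ β) (hG : 0 < G) (hθ : ∀ k, θ k ⬝ᵥ θ k ≤ G)
    (hφ : ∀ k, φ k ⬝ᵥ φ k ≤ c) (hquad : ∀ k, ∑ j ∈ Iic k, (θ k ⬝ᵥ φ j) ^ 2 ≤ β) :
    ∑ k, θ k ⬝ᵥ φ k ≤ √((lam + β) * (Fintype.card κ * Fintype.card ι) *
      Real.log (1 + Fintype.card κ * G * c / (Fintype.card ι * lam))) := by
  classical
  set n : ℝ := (Fintype.card ι : ℝ)
  have hn : 0 < n := by simp [n, Fintype.card_pos]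
  -- The regularisation `lam / G` keeps the ridge part of `θ k ⬝ᵥ V k *ᵥ θ k` below `lam`.
  have hlamG : 0 < lam / G := div_pos hlam hG
  set V : κ → Matrix ι ι ℝ := fun k => regGram (lam / G) φ (Iic k)
  set g : κ → ℝ := fun k => φ k ⬝ᵥ (V k)⁻¹ *ᵥ φ k
  have hV k : (V k).PosDef := posDef_regGram φ hlamG _
  have hg k : 0 ≤ g k := by simpa using (hV k).inv.posSemidef.dotProduct_mulVec_nonneg (φ k)
  have hθV k : θ k ⬝ᵥ V k *ᵥ θ k ≤ lam + β := by
    have hridge : lam / G * (θ k ⬝ᵥ θ k) ≤ lam :=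
      calc lam / G * (θ k ⬝ᵥ θ k) ≤ lam / G * G := by gcongr; exact hθ k
        _ = lam := div_mul_cancel₀ lam hG.ne'
    rw [dotProduct_regGram_mulVec]
    linarith [hquad k]
  have hterm k : (θ k ⬝ᵥ φ k) ^ 2 ≤ (lam + β) * g k :=
    ((hV k).sq_dotProduct_le _ _).trans (mul_le_mul_of_nonneg_right (hθV k) (hg k))
  have hpotential : ∑ k, g k ≤ n * Real.log (1 + Fintype.card κ * G * c / (n * lam)) := by
    have hsum_g := sum_dotProduct_regGram_inv_le φ hlamG univ
    simp only [filter_ge_eq_Iic] at hsum_g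
    refine hsum_g.trans (mul_le_mul_of_nonneg_left ?_ hn.le)
    have hS : 0 ≤ ∑ k, φ k ⬝ᵥ φ k :=
      sum_nonneg fun k _ => by simpa using dotProduct_star_self_nonneg (φ k)
    have hSc : ∑ k, φ k ⬝ᵥ φ k ≤ Fintype.card κ * c := by
      simpa using sum_le_sum fun k (_ : k ∈ univ) => hφ k
    refine Real.log_le_log (by positivity) (add_le_add_right ?_ 1)
    calc (∑ k, φ k ⬝ᵥ φ k) / (n * (lam / G)) = G * (∑ k, φ k ⬝ᵥ φ k) / (n * lam) := by
          field_simp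
      _ ≤ G * (Fintype.card κ * c) / (n * lam) := by gcongr
      _ = Fintype.card κ * G * c / (n * lam) := by ring
  apply Real.le_sqrt_of_sq_le
  calc (∑ k, θ k ⬝ᵥ φ k) ^ 2 ≤ Fintype.card κ * ∑ k, (θ k ⬝ᵥ φ k) ^ 2 := sq_sum_le_card_mul_sum_sq
    _ ≤ Fintype.card κ * ∑ k, (lam + β) * g k := by gcongr with k; exact hterm k
    _ = (lam + β) * Fintype.card κ * ∑ k, g k := by rw [← mul_sum]; ring
    _ ≤ (lam + β) * Fintype.card κ * (n * Real.log (1 + Fintype.card κ * G * c / (n * lam))) := by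
        gcongr
    _ = _ := by ring

theorem dotProduct_self_le_sq_sum_abs {ι : Type*} [Fintype ι] (v : ι → ℝ) :
    v ⬝ᵥ v ≤ (∑ i, |v i|) ^ 2 :=
  calc v ⬝ᵥ v = ∑ i, |v i| ^ 2 := sum_congr rfl fun i _ => by rw [sq_abs, sq]
    _ ≤ (∑ i, |v i|) ^ 2 := sum_sq_le_sq_sum_of_nonneg fun i _ => abs_nonneg _

theorem SignType.abs_coe_mul_le {α : Type*} [Ring α] [LinearOrder α] [IsStrictOrderedRing α]
    (s : SignType) (a : α) : |(s : α) * a| ≤ |a| := by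
  cases s <;> simp

section AlignedSum

variable {L M N D : Type*} [Fintype L] [Fintype M] [Fintype N] [Fintype D]

noncomputable def alignedSum (w : L → M → D → ℝ) (x : L → N → D → ℝ) : L × M × D → ℝ :=
  fun p => ∑ n, (SignType.sign (∑ i, w p.1 p.2.1 i * x p.1 n i) : ℝ) * x p.1 n p.2.2

theorem dotProduct_alignedSum (v w : L → M → D → ℝ) (x : L → N → D → ℝ) :
    (fun p : L × M × D => v p.1 p.2.1 p.2.2) ⬝ᵥ alignedSum w x =
      ∑ l, ∑ m, ∑ n, (SignType.sign (∑ i, w l m i * x l n i) : ℝ) * ∑ i, v l m i * x l n i := by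
  simp only [dotProduct, alignedSum, Fintype.sum_prod_type, mul_sum]
  refine sum_congr rfl fun l _ => sum_congr rfl fun m _ => ?_
  rw [sum_comm]
  exact sum_congr rfl fun n _ => sum_congr rfl fun i _ => by ring

theorem dotProduct_alignedSum_self (w : L → M → D → ℝ) (x : L → N → D → ℝ) :
    (fun p : L × M × D => w p.1 p.2.1 p.2.2) ⬝ᵥ alignedSum w x =
      ∑ l, ∑ m, ∑ n, |∑ i, w l m i * x l n i| := by
  simp only [dotProduct_alignedSum, sign_mul_self]

theorem abs_dotProduct_alignedSum_le (v w : L → M → D → ℝ) (x : L → N → D → ℝ) :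
    |(fun p : L × M × D => v p.1 p.2.1 p.2.2) ⬝ᵥ alignedSum w x| ≤
      ∑ l, ∑ m, ∑ n, |∑ i, v l m i * x l n i| := by
  rw [dotProduct_alignedSum]
  refine (abs_sum_le_sum_abs _ _).trans (sum_le_sum fun l _ => ?_)
  refine (abs_sum_le_sum_abs _ _).trans (sum_le_sum fun m _ => ?_)
  exact (abs_sum_le_sum_abs _ _).trans (sum_le_sum fun n _ => SignType.abs_coe_mul_le _ _)

theorem alignedSum_dotProduct_self_le (w : L → M → D → ℝ) (x : L → N → D → ℝ) :
    alignedSum w x ⬝ᵥ alignedSum w x ≤ Fintype.card M * (∑ l, ∑ n, ∑ i, |x l n i|) ^ 2 := by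
  have hentry (p : L × M × D) : |alignedSum w x p| ≤ ∑ n, |x p.1 n p.2.2| :=
    (abs_sum_le_sum_abs _ _).trans (sum_le_sum fun n _ => SignType.abs_coe_mul_le _ _)
  calc alignedSum w x ⬝ᵥ alignedSum w x = ∑ p, |alignedSum w x p| ^ 2 :=
        sum_congr rfl fun p _ => by rw [sq_abs, sq]
    _ ≤ ∑ p : L × M × D, (∑ n, |x p.1 n p.2.2|) ^ 2 := by gcongr with p; exact hentry p
    _ = Fintype.card M * ∑ q : L × D, (∑ n, |x q.1 n q.2|) ^ 2 := by
        simp only [Fintype.sum_prod_type, sum_const, card_univ, nsmul_eq_mul, mul_sum]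
    _ ≤ Fintype.card M * (∑ q : L × D, ∑ n, |x q.1 n q.2|) ^ 2 := by
        gcongr
        exact sum_sq_le_sq_sum_of_nonneg fun q _ => sum_nonneg fun n _ => abs_nonneg _
    _ = Fintype.card M * (∑ l, ∑ n, ∑ i, |x l n i|) ^ 2 := by
        rw [Fintype.sum_prod_type]
        simp_rw [sum_comm (γ := D)]

end AlignedSum

theorem index_change_deluxe_general
    (d K L M N : ℕ) (hd : 1 ≤ d) (hL : 1 ≤ L) (hM : 1 ≤ M)
    (β Gw Gx : ℝ) (hβ : 0 ≤ β) (hGw : 0 < Gw)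
    (w : Fin K → Fin L → Fin M → Fin d → ℝ)
    (x : Fin K → Fin L → Fin N → Fin d → ℝ)
    (hsum : ∀ k : Fin K, ∑ j ∈ Finset.Iic k,
      (∑ l : Fin L, ∑ m : Fin M, ∑ n : Fin N, |∑ i, w k l m i * x j l n i|) ^ 2 ≤ β)
    (hw : ∀ k : Fin K, ∑ l : Fin L, ∑ m : Fin M, ∑ i, |w k l m i| ≤ Gw)
    (hx : ∀ k : Fin K, ∑ l : Fin L, ∑ n : Fin N, ∑ i, |x k l n i| ≤ Gx) :
    ∀ lam : ℝ, 0 < lam →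
      ∑ k : Fin K, ∑ l : Fin L, ∑ m : Fin M, ∑ n : Fin N, |∑ i, w k l m i * x k l n i| ≤
        Real.sqrt ((lam + β) * (d * L * M * K) *
          Real.log (1 + M * Gw ^ 2 * Gx ^ 2 * K / (d * L * lam))) := by
  intro lam hlam
  have : Nonempty (Fin L × Fin M × Fin d) := ⟨(⟨0, hL⟩, ⟨0, hM⟩, ⟨0, hd⟩)⟩
  set θ : Fin K → Fin L × Fin M × Fin d → ℝ := fun k p => w k p.1 p.2.1 p.2.2
  set φ : Fin K → Fin L × Fin M × Fin d → ℝ := fun k => alignedSum (w k) (x k)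
  have hθ k : θ k ⬝ᵥ θ k ≤ Gw ^ 2 := by
    refine (dotProduct_self_le_sq_sum_abs _).trans (pow_le_pow_left₀ (by positivity) ?_ 2)
    simpa [θ, Fintype.sum_prod_type] using hw k
  have hφ k : φ k ⬝ᵥ φ k ≤ M * Gx ^ 2 := by
    refine (alignedSum_dotProduct_self_le _ _).trans ?_
    simp only [Fintype.card_fin]
    gcongr
    exact hx k
  have hquad k : ∑ j ∈ Iic k, (θ k ⬝ᵥ φ j) ^ 2 ≤ β :=
    (sum_le_sum fun j _ => sq_le_sq' (neg_le_of_abs_le (abs_dotProduct_alignedSum_le _ _ _))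
      (le_of_abs_le (abs_dotProduct_alignedSum_le _ _ _))).trans (hsum k)
  have hmain :=
    sum_dotProduct_le_sqrt_of_sum_sq_dotProduct_le θ φ hlam hβ (by positivity) hθ hφ hquad
  simp only [θ, φ, dotProduct_alignedSum_self, Fintype.card_fin, Fintype.card_prod,
    Nat.cast_mul] at hmain
  refine hmain.trans (Real.sqrt_le_sqrt ?_)
  have hM' : (1 : ℝ) ≤ M := by exact_mod_cast hM
  rw [show (d : ℝ) * L * M * K = K * (L * (M * d)) by ring]
  gcongr _ * Real.log (1 + ?_)
  rw [div_le_div_iff₀ (by positivity) (by positivity)]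
  have hX : 0 ≤ (K : ℝ) * Gw ^ 2 * Gx ^ 2 * M * d * L * lam := by positivity
  nlinarith [mul_le_mul_of_nonneg_left hM' hX]

/-- **Proposition 9** (key technical index-change result).  Given vectors
`w_{k,l,m}, x_{k,l,n} ∈ ℝ^d` with `∑_{j=1}^k (∑_{l,m,n} |w_{k,l,m}ᵀ x_{j,l,n}|)² ≤ β`,
`∑_{l,m} ‖w_{k,l,m}‖₁ ≤ G_w` and `∑_{l,n} ‖x_{k,l,n}‖₁ ≤ G_x` for all `k`,
then for every `λ > 0`,
`∑_k ∑_{l,m,n} |w_{k,l,m}ᵀ x_{k,l,n}| ≤ √((λ+β) d L M K log(1 + M G_w² G_x² K/(d L λ)))`. -/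
theorem index_change_deluxe
    (d K L M N : ℕ) (hd : 1 ≤ d) (hK : 1 ≤ K) (hL : 1 ≤ L) (hM : 1 ≤ M) (hN : 1 ≤ N)
    (β Gw Gx : ℝ) (hβ : 0 ≤ β) (hGw : 0 < Gw) (hGx : 0 < Gx)
    (w : Fin K → Fin L → Fin M → Fin d → ℝ)
    (x : Fin K → Fin L → Fin N → Fin d → ℝ)
    (hsum : ∀ k : Fin K, ∑ j ∈ Finset.Iic k,
      (∑ l : Fin L, ∑ m : Fin M, ∑ n : Fin N, |∑ i, w k l m i * x j l n i|) ^ 2 ≤ β)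
    (hw : ∀ k : Fin K, ∑ l : Fin L, ∑ m : Fin M, ∑ i, |w k l m i| ≤ Gw)
    (hx : ∀ k : Fin K, ∑ l : Fin L, ∑ n : Fin N, ∑ i, |x k l n i| ≤ Gx) :
    ∀ lam : ℝ, 0 < lam →
      ∑ k : Fin K, ∑ l : Fin L, ∑ m : Fin M, ∑ n : Fin N, |∑ i, w k l m i * x k l n i| ≤
        Real.sqrt ((lam + β) * (d * L * M * K) *
          Real.log (1 + M * Gw ^ 2 * Gx ^ 2 * K / (d * L * lam))) :=
  index_change_deluxe_general d K L M N hd hL hM β Gw Gx hβ hGw w x hsum hw hx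
end
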